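/- Let d > −1 with d ≠ 0 and let q ∈ (0,1). Define o^d(q) = inf over positive integers μ of ( μ + (1/d)·log₂( q^(1+d) + (1−q)^(1+d)·(2^μ − 1)^(−d) ) ) and ω^d(q) = inf over positive integers λ of ( λ + (1/d)·log₂( q^(1+d) + 2^d·(1−q)^(1+d)·(2^λ − 1)^(−d) ) ). Then 0 ≤ o^d(q) and ω^d(q) ≤ 1. -/

import Mathlib

open Real

/-- The lower-bound function `o^d(q)`. -/
noncomputable def lowerBound (d q : ℝ) : ℝ :=
  sInf { r | ∃ μ : ℕ, 1 ≤ μ ∧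
    r = (μ : ℝ) + (1 / d) * Real.logb 2
      (q ^ (1 + d) + (1 - q) ^ (1 + d) * ((2 : ℝ) ^ (μ : ℝ) - 1) ^ (-d)) }

/-- The upper-bound function `ω^d(q)`. -/
noncomputable def upperBound (d q : ℝ) : ℝ :=
  sInf { r | ∃ lam : ℕ, 1 ≤ lam ∧
    r = (lam : ℝ) + (1 / d) * Real.logb 2
      (q ^ (1 + d) + (2 : ℝ) ^ d * (1 - q) ^ (1 + d) * ((2 : ℝ) ^ (lam : ℝ) - 1) ^ (-d)) }

/-!
With `N = 2 ^ μ`, the sum `q ^ (1 + d) + (1 - q) ^ (1 + d) (N - 1) ^ (-d)` is the perspective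
`u₁ (a₁ / u₁) ^ (1 + d) + u₂ (a₂ / u₂) ^ (1 + d)` of `x ↦ x ^ (1 + d)` at `a = (q, 1 - q)`,
`u = (1, N - 1)`, so Jensen's inequality (convex for `d > 0`, concave for `d < 0`) compares it with
`N ^ (-d)`, which is exactly `0 ≤ o^d(q)`. The factor `2 ^ d` in `ω^d` only moves the sum further in
the right direction, so the terms defining `ω^d(q)` are nonnegative as well.

For `ω^d(q) ≤ 1` take `λ = n + 1` where `2 ^ n ≤ 1 / q < 2 ^ (n + 1)`. The sum inside `ω^d` is then
`q x ^ d + (1 - q) y ^ d` with `x = q` and `y = 2 (1 - q) / (2 ^ λ - 1)`, and both points are at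
most `2 ^ (-n)`.
-/

lemma mul_div_rpow_eq {a u : ℝ} (ha : 0 ≤ a) (hu : 0 < u) (p : ℝ) :
    u * (a / u) ^ p = a ^ p * u ^ (1 - p) := by
  rw [div_rpow ha hu.le, rpow_sub hu, rpow_one]
  field_simp

lemma add_rpow_mul_add_rpow_one_sub_le {p a b u v : ℝ} (hp : 1 ≤ p) (ha : 0 ≤ a) (hb : 0 ≤ b)
    (hu : 0 < u) (hv : 0 < v) :
    (a + b) ^ p * (u + v) ^ (1 - p) ≤ a ^ p * u ^ (1 - p) + b ^ p * v ^ (1 - p) := by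
  have huv : 0 < u + v := by positivity
  have h := (convexOn_rpow hp).2 (Set.mem_Ici.2 (by positivity : (0:ℝ) ≤ a / u))
    (Set.mem_Ici.2 (by positivity : (0:ℝ) ≤ b / v)) (by positivity : (0:ℝ) ≤ u / (u + v))
    (by positivity : (0:ℝ) ≤ v / (u + v)) (by field_simp : u / (u + v) + v / (u + v) = 1)
  have hmean : u / (u + v) * (a / u) + v / (u + v) * (b / v) = (a + b) / (u + v) := by
    field_simp
  simp only [smul_eq_mul, hmean] at h
  rw [← mul_div_rpow_eq (add_nonneg ha hb) huv, ← mul_div_rpow_eq ha hu, ← mul_div_rpow_eq hb hv]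
  calc (u + v) * ((a + b) / (u + v)) ^ p
      ≤ (u + v) * (u / (u + v) * (a / u) ^ p + v / (u + v) * (b / v) ^ p) := by gcongr
    _ = u * (a / u) ^ p + v * (b / v) ^ p := by field_simp

lemma le_add_rpow_mul_add_rpow_one_sub {p a b u v : ℝ} (hp₀ : 0 ≤ p) (hp₁ : p ≤ 1) (ha : 0 ≤ a)
    (hb : 0 ≤ b) (hu : 0 < u) (hv : 0 < v) :
    a ^ p * u ^ (1 - p) + b ^ p * v ^ (1 - p) ≤ (a + b) ^ p * (u + v) ^ (1 - p) := by
  have huv : 0 < u + v := by positivity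
  have h := (concaveOn_rpow hp₀ hp₁).2 (Set.mem_Ici.2 (by positivity : (0:ℝ) ≤ a / u))
    (Set.mem_Ici.2 (by positivity : (0:ℝ) ≤ b / v)) (by positivity : (0:ℝ) ≤ u / (u + v))
    (by positivity : (0:ℝ) ≤ v / (u + v)) (by field_simp : u / (u + v) + v / (u + v) = 1)
  have hmean : u / (u + v) * (a / u) + v / (u + v) * (b / v) = (a + b) / (u + v) := by
    field_simp
  simp only [smul_eq_mul, hmean] at h
  rw [← mul_div_rpow_eq (add_nonneg ha hb) huv, ← mul_div_rpow_eq ha hu, ← mul_div_rpow_eq hb hv]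
  calc u * (a / u) ^ p + v * (b / v) ^ p
      = (u + v) * (u / (u + v) * (a / u) ^ p + v / (u + v) * (b / v) ^ p) := by field_simp
    _ ≤ (u + v) * ((a + b) / (u + v)) ^ p := by gcongr

lemma le_one_div_mul_logb_two {d t x : ℝ} (hd : d ≠ 0) (hx : 0 < x)
    (hpos : 0 < d → 2 ^ (d * t) ≤ x) (hneg : d < 0 → x ≤ 2 ^ (d * t)) :
    t ≤ 1 / d * logb 2 x := by
  rw [one_div_mul_eq_div]
  rcases hd.lt_or_gt with h | h
  · rw [le_div_iff_of_neg h, logb_le_iff_le_rpow one_lt_two hx, mul_comm]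
    exact hneg h
  · rw [le_div_iff₀ h, le_logb_iff_rpow_le one_lt_two hx, mul_comm]
    exact hpos h

lemma one_div_mul_logb_two_le {d t x : ℝ} (hd : d ≠ 0) (hx : 0 < x)
    (hpos : 0 < d → x ≤ 2 ^ (d * t)) (hneg : d < 0 → 2 ^ (d * t) ≤ x) :
    1 / d * logb 2 x ≤ t := by
  rw [one_div_mul_eq_div]
  rcases hd.lt_or_gt with h | h
  · rw [div_le_iff_of_neg h, le_logb_iff_rpow_le one_lt_two hx, mul_comm]
    exact hneg h
  · rw [div_le_iff₀ h, logb_le_iff_le_rpow one_lt_two hx, mul_comm]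
    exact hpos h

section

variable {d q : ℝ}

lemma rpow_neg_le_rpow_add_mul_rpow_neg (hd : 0 < d) (hq₀ : 0 ≤ q) (hq₁ : q ≤ 1) {N : ℝ}
    (hN : 1 < N) : N ^ (-d) ≤ q ^ (1 + d) + (1 - q) ^ (1 + d) * (N - 1) ^ (-d) := by
  have h := add_rpow_mul_add_rpow_one_sub_le (by linarith : 1 ≤ 1 + d) hq₀ (sub_nonneg.2 hq₁)
    one_pos (sub_pos.2 hN)
  rwa [add_sub_cancel, add_sub_cancel, one_rpow, one_rpow, one_mul, mul_one,
    show (1 : ℝ) - (1 + d) = -d by ring] at h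

lemma rpow_add_mul_rpow_neg_le_rpow_neg (hd₁ : -1 < d) (hd : d < 0) (hq₀ : 0 ≤ q) (hq₁ : q ≤ 1)
    {N : ℝ} (hN : 1 < N) : q ^ (1 + d) + (1 - q) ^ (1 + d) * (N - 1) ^ (-d) ≤ N ^ (-d) := by
  have h := le_add_rpow_mul_add_rpow_one_sub (by linarith : 0 ≤ 1 + d) (by linarith : 1 + d ≤ 1)
    hq₀ (sub_nonneg.2 hq₁) one_pos (sub_pos.2 hN)
  rwa [add_sub_cancel, add_sub_cancel, one_rpow, one_rpow, one_mul, mul_one,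
    show (1 : ℝ) - (1 + d) = -d by ring] at h

lemma zero_le_add_one_div_mul_logb (hd : -1 < d) (hd0 : d ≠ 0) (hq₀ : 0 < q) (hq₁ : q < 1)
    {a : ℝ} (ha : 0 < a) (ha_pos : 0 < d → 1 ≤ a) (ha_neg : d < 0 → a ≤ 1) {n : ℕ} (hn : 1 ≤ n) :
    0 ≤ n + 1 / d * logb 2
      (q ^ (1 + d) + a * (1 - q) ^ (1 + d) * ((2 : ℝ) ^ (n : ℝ) - 1) ^ (-d)) := by
  set N : ℝ := 2 ^ (n : ℝ)
  have hN : 1 < N := one_lt_rpow one_lt_two (by exact_mod_cast hn)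
  have hNd : N ^ (-d) = 2 ^ (d * -n) := by rw [← rpow_mul zero_le_two]; ring_nf
  have hX : 0 ≤ (1 - q) ^ (1 + d) * (N - 1) ^ (-d) := by
    have : 0 ≤ 1 - q := by linarith
    have : 0 ≤ N - 1 := by linarith
    positivity
  suffices -(n : ℝ) ≤ 1 / d * logb 2 (q ^ (1 + d) + a * (1 - q) ^ (1 + d) * (N - 1) ^ (-d)) by
    linarith
  refine le_one_div_mul_logb_two hd0 (by positivity) (fun h ↦ ?_) (fun h ↦ ?_) <;> rw [← hNd]
  · have := rpow_neg_le_rpow_add_mul_rpow_neg h hq₀.le hq₁.le hN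
    nlinarith [ha_pos h]
  · have := rpow_add_mul_rpow_neg_le_rpow_neg hd h hq₀.le hq₁.le hN
    nlinarith [ha_neg h]

lemma exists_add_one_div_mul_logb_le_one (hd0 : d ≠ 0) (hq₀ : 0 < q) (hq₁ : q < 1) :
    ∃ L : ℕ, 1 ≤ L ∧ (L : ℝ) + 1 / d * logb 2
      (q ^ (1 + d) + 2 ^ d * (1 - q) ^ (1 + d) * ((2 : ℝ) ^ (L : ℝ) - 1) ^ (-d)) ≤ 1 := by
  obtain ⟨n, hn, hn'⟩ := exists_nat_pow_near (one_le_inv₀ hq₀ |>.2 hq₁.le) one_lt_two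
  refine ⟨n + 1, by omega, ?_⟩
  rw [rpow_natCast]
  set P : ℝ := 2 ^ (n + 1)
  have hqP : 1 < q * P := by rw [inv_lt_iff_one_lt_mul₀ hq₀] at hn'; linarith [mul_comm P q]
  have hqP' : q * P ≤ 2 := by
    have : q * 2 ^ n ≤ 1 := by
      calc q * 2 ^ n ≤ q * q⁻¹ := by gcongr
        _ = 1 := mul_inv_cancel₀ hq₀.ne'
    simp only [P, pow_succ]; linarith
  have hP : 1 < P := by nlinarith
  set c : ℝ := 2 / P
  set y : ℝ := 2 * (1 - q) / (P - 1)
  have hy : 0 < y := div_pos (by linarith) (by linarith)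
  have hqc : q ≤ c := by rw [le_div_iff₀ (by linarith)]; linarith
  have hyc : y ≤ c := by
    rw [div_le_div_iff₀ (by linarith) (by linarith)]; nlinarith
  have hc : c ^ d = 2 ^ (d * -n) := by
    have : c = ((2 : ℝ) ^ n)⁻¹ := by simp only [c, P, pow_succ]; field_simp
    rw [this, mul_comm, rpow_mul zero_le_two, rpow_neg zero_le_two, rpow_natCast]
  have hB : q ^ (1 + d) + 2 ^ d * (1 - q) ^ (1 + d) * (P - 1) ^ (-d)
      = q * q ^ d + (1 - q) * y ^ d := by
    rw [rpow_add hq₀, rpow_add (by linarith), rpow_one, rpow_one,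
      div_rpow (by positivity) (by linarith), mul_rpow zero_le_two (by linarith),
      rpow_neg (by linarith)]
    ring
  push_cast
  suffices 1 / d * logb 2 (q * q ^ d + (1 - q) * y ^ d) ≤ -n by rw [hB]; linarith
  refine one_div_mul_logb_two_le hd0 (by positivity) (fun h ↦ ?_) (fun h ↦ ?_) <;> rw [← hc]
  · calc q * q ^ d + (1 - q) * y ^ d ≤ q * c ^ d + (1 - q) * c ^ d := by
          have : 0 ≤ 1 - q := by linarith
          gcongr
      _ = c ^ d := by ring
  · calc c ^ d = q * c ^ d + (1 - q) * c ^ d := by ring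
      _ ≤ q * q ^ d + (1 - q) * y ^ d := by
          have : 0 ≤ 1 - q := by linarith
          gcongr q * ?_ + (1 - q) * ?_
          exacts [rpow_le_rpow_of_nonpos hq₀ hqc h.le, rpow_le_rpow_of_nonpos hy hyc h.le]

end

theorem stmt_9 (d : ℝ) (hd : -1 < d) (hd0 : d ≠ 0) (q : ℝ) (hq : q ∈ Set.Ioo (0 : ℝ) 1) :
    0 ≤ lowerBound d q ∧ upperBound d q ≤ 1 := by
  obtain ⟨hq₀, hq₁⟩ := hq
  refine ⟨le_csInf ⟨_, 1, le_rfl, rfl⟩ ?_, ?_⟩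
  · rintro r ⟨μ, hμ, rfl⟩
    simpa only [one_mul] using
      zero_le_add_one_div_mul_logb hd hd0 hq₀ hq₁ one_pos (fun _ ↦ le_rfl) (fun _ ↦ le_rfl) hμ
  · obtain ⟨L, hL, hle⟩ := exists_add_one_div_mul_logb_le_one hd0 hq₀ hq₁
    refine csInf_le_of_le ⟨0, ?_⟩ ⟨L, hL, rfl⟩ hle
    rintro r ⟨l, hl, rfl⟩
    exact zero_le_add_one_div_mul_logb hd hd0 hq₀ hq₁ (by positivity)
      (fun h ↦ one_le_rpow one_le_two h.le)
      (fun h ↦ rpow_le_one_of_one_le_of_nonpos one_le_two h.le) hl
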